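/- arXiv:2312.17644 — 4 statements merged into one kernel-verified Lean document; each statement's English description precedes it below -/
import Mathlib

section
/- Let X₁ and X₂ be subshifts over countably infinite alphabets. Any conjugacy H : X₁^OTW → X₂^OTW (a length-preserving homeomorphism commuting with the shifts) maps X₁ bijectively onto X₂, and its restriction h : X₁ → X₂ is a homeomorphism for the product topologies satisfying h∘σ = σ∘h. In particular, if X₁^OTW and X₂^OTW are conjugate, then (X₁,σ) and (X₂,σ) are topologically conjugate with respect to the product topologies. -/
namespace SubshiftPaper

variable {A : Type*}

/-- The initial word of length `n` of a sequence. -/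
def word (x : ℕ → A) (n : ℕ) : List A := List.ofFn (fun i : Fin n => x i)

/-- Concatenation of a finite word with an infinite sequence. -/
def cat (α : List A) (x : ℕ → A) : ℕ → A := fun n =>
  if h : n < α.length then α.get ⟨n, h⟩ else x (n - α.length)

/-- The shift map on infinite sequences. -/
def shiftSeq (x : ℕ → A) : ℕ → A := fun n => x (n + 1)

/-- `X` is a subshift: the set of sequences avoiding a set `F` of forbidden nonempty
finite words. -/
def IsSubshift (X : Set (ℕ → A)) : Prop :=
  ∃ F : Set (List A), (∀ w ∈ F, w ≠ []) ∧
    X = {x : ℕ → A | ∀ n k : ℕ, word (fun i => x (n + i)) k ∉ F}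

/-- The language of `X`: all finite initial blocks of elements of `X` (and their
subblocks appear by shifting; for subshifts initial blocks suffice). -/
def language (X : Set (ℕ → A)) : Set (List A) :=
  {α | ∃ x ∈ X, word x α.length = α}

open Classical in
/-- The product metric `d(x,y) = 2^{-min{n : xₙ ≠ yₙ}}`. -/
noncomputable def prodDist (x y : ℕ → A) : ℝ :=
  if h : x = y then 0 else (2 : ℝ)⁻¹ ^ Nat.find (Function.ne_iff.mp h)

/-- The cylinder set `Z_α = {x ∈ X : x starts with α}`. -/
def cylinder (X : Set (ℕ → A)) (α : List A) : Set (ℕ → A) :=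
  {x ∈ X | word x α.length = α}

/-- The set `C(α,β) = {βx : βx ∈ X and αx ∈ X}`. -/
def Cab (X : Set (ℕ → A)) (α β : List A) : Set (ℕ → A) :=
  {y | ∃ x : ℕ → A, y = cat β x ∧ cat β x ∈ X ∧ cat α x ∈ X}

/-- The follower set `F_α = {x ∈ X : αx ∈ X}`. -/
def follower (X : Set (ℕ → A)) (α : List A) : Set (ℕ → A) :=
  {x ∈ X | cat α x ∈ X}

/-- The Boolean algebra `U` of subsets of `X` generated by the sets `C(α,β)`: the smallest
collection of subsets containing all `C(α,β)` and `X` and closed under finite unions, finite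
intersections and complements in `X`. -/
def BA (X : Set (ℕ → A)) : Set (Set (ℕ → A)) :=
  ⋂₀ {C : Set (Set (ℕ → A)) | X ∈ C ∧
    (∀ α ∈ language X, ∀ β ∈ language X, Cab X α β ∈ C) ∧
    (∀ S ∈ C, ∀ T ∈ C, S ∪ T ∈ C) ∧
    (∀ S ∈ C, ∀ T ∈ C, S ∩ T ∈ C) ∧
    (∀ S ∈ C, X \ S ∈ C)}

/-- The periodic sequence `γ^∞ = γγγ⋯`. -/
def per (γ : List A) (h : γ ≠ []) : ℕ → A :=
  fun n => γ.get ⟨n % γ.length, Nat.mod_lt n (List.length_pos_iff.mpr h)⟩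

/-- A point is eventually periodic if it has the form `αγ^∞`. -/
def EventuallyPeriodic (x : ℕ → A) : Prop :=
  ∃ (α γ : List A) (h : γ ≠ []), x = cat α (per γ h)

/-- Condition (L): for every finite `P ⊆ L_X` and every nonempty `γ ∈ L_X` with
`γ^∞ ∈ F_P := ⋂_{α ∈ P} F_α`, the set `F_P` contains an element other than `γ^∞`. -/
def ConditionL (X : Set (ℕ → A)) : Prop :=
  ∀ P : Finset (List A), ↑P ⊆ language X →
    ∀ γ ∈ language X, ∀ h : γ ≠ [],
      per γ h ∈ X ∩ ⋂ α ∈ P, follower X α →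
        ∃ z ∈ X ∩ ⋂ α ∈ P, follower X α, z ≠ per γ h


/-- The finite word `α` viewed as the element `α∞∞∞⋯` of `Σ_A`. -/
def finSeq (α : List A) : ℕ → Option A := fun n =>
  if h : n < α.length then some (α.get ⟨n, h⟩) else none

/-- An infinite sequence viewed as an element of `Σ_A`. -/
def infSeq (x : ℕ → A) : ℕ → Option A := fun n => some (x n)

/-- The OTW-subshift `X^OTW = X^inf ∪ X^fin` associated with a subshift `X`: `X^fin` is the
set of finite words `α` admitting infinitely many letters `a` with `αay ∈ X` for some `y`. -/
def otw (X : Set (ℕ → A)) : Set (ℕ → Option A) :=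
  (infSeq '' X) ∪
    {z | ∃ α : List A, z = finSeq α ∧
      {a : A | ∃ y : ℕ → A, cat (α ++ [a]) y ∈ X}.Infinite}

open Classical in
/-- The length of an element of `Σ_A`. -/
noncomputable def otwLength (z : ℕ → Option A) : ℕ∞ :=
  if h : ∃ n, z n = none then (Nat.find h : ℕ∞) else ⊤

/-- The shift map on `Σ_A` (it deletes the first symbol). -/
def shiftO (z : ℕ → Option A) : ℕ → Option A := fun n => z (n + 1)

/-- The generalized cylinder `Z(α, F)`. -/
def gencyl (α : List A) (F : Finset A) : Set (ℕ → Option A) :=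
  {z | (∀ i : Fin α.length, z i = some (α.get i)) ∧ ∀ a ∈ F, z α.length ≠ some a}

/-- The topology on `X^OTW` generated by the generalized cylinders `Z(α,F)`, `α ∈ L_X`,
`F ⊆ A` finite. -/
def otwTop (X : Set (ℕ → A)) : TopologicalSpace ↥(otw X) :=
  TopologicalSpace.generateFrom
    {S | ∃ α ∈ language X, ∃ F : Finset A, S = Subtype.val ⁻¹' gencyl α F}

/-- `H : X₁^OTW → X₂^OTW` is a conjugacy of OTW-subshifts: a homeomorphism (for the topologies
generated by the generalized cylinders) commuting with the shifts and preserving lengths. -/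
def IsOTWConjugacy {A₁ A₂ : Type*} (X₁ : Set (ℕ → A₁)) (X₂ : Set (ℕ → A₂))
    (H : ↥(otw X₁) ≃ ↥(otw X₂)) : Prop :=
  @Continuous _ _ (otwTop X₁) (otwTop X₂) H ∧
  @Continuous _ _ (otwTop X₂) (otwTop X₁) H.symm ∧
  (∀ z : ↥(otw X₁), otwLength (H z).1 = otwLength z.1) ∧
  (∀ z w : ↥(otw X₁), w.1 = shiftO z.1 → (H w).1 = shiftO (H z).1)

/-- The inclusion of `X` into `X^OTW`. -/
def infMem {A : Type*} {X : Set (ℕ → A)} (x : ↥X) : ↥(otw X) :=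
  ⟨infSeq x.1, Set.mem_union_left _ (Set.mem_image_of_mem _ x.2)⟩

/-- The product topology on `A^ℕ` for a discrete alphabet `A`. -/
def prodTop (A : Type*) : TopologicalSpace (ℕ → A) :=
  @Pi.topologicalSpace ℕ (fun _ => A) (fun _ => ⊥)

/-- The product topology restricted to a subshift `X ⊆ A^ℕ`. -/
def subTop {A : Type*} (X : Set (ℕ → A)) : TopologicalSpace ↥X :=
  TopologicalSpace.induced Subtype.val (prodTop A)

/-! Since `H` preserves lengths, it maps the points of length `∞` of `X₁^OTW`, which are exactly
`X₁`, onto those of `X₂^OTW`. On `X` the topology of `X^OTW` induces the product topology: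
`Z(α, F) ∩ X` is open in the product topology, and conversely `{x_n = a}` is open in `X^OTW`
because every point of it, finite or not, starts with a word `β ∈ L_X` of length `n + 1` and so
lies in `Z(β, ∅) ⊆ {x_n = a}`. Hence the restriction of `H` is a homeomorphism, and it commutes
with `σ` because `H` does. -/

section InfinitePoints

variable {X : Set (ℕ → A)}

lemma infSeq_injective : Function.Injective (infSeq (A := A)) :=
  fun _ _ h => funext fun n => Option.some.inj (congrFun h n)

lemma otwLength_infSeq (x : ℕ → A) : otwLength (infSeq x) = ⊤ := by
  simp [otwLength, infSeq]

lemma exists_mem_infSeq_eq_of_otwLength_eq_top {z : ℕ → Option A} (hz : z ∈ otw X)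
    (h : otwLength z = ⊤) : ∃ x ∈ X, infSeq x = z := by
  rcases hz with ⟨x, hx, rfl⟩ | ⟨α, rfl, -⟩
  · exact ⟨x, hx, rfl⟩
  · have hnone : ∃ n, finSeq α n = none := ⟨α.length, by simp [finSeq]⟩
    rw [otwLength, dif_pos hnone] at h
    exact absurd h (WithTop.natCast_ne_top _)

variable (X) in
noncomputable def infMemEquiv : X ≃ {z : otw X // otwLength z.1 = ⊤} :=
  Equiv.ofBijective (fun x => ⟨infMem x, otwLength_infSeq x.1⟩)
    ⟨fun _ _ h => Subtype.ext (infSeq_injective (congrArg (fun z => z.1.1) h)),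
     fun z => by
      obtain ⟨x, hx, hxz⟩ := exists_mem_infSeq_eq_of_otwLength_eq_top z.1.2 z.2
      exact ⟨⟨x, hx⟩, Subtype.ext (Subtype.ext hxz)⟩⟩

end InfinitePoints

section Restriction

variable {A₁ A₂ : Type*} {X₁ : Set (ℕ → A₁)} {X₂ : Set (ℕ → A₂)}

noncomputable def restrictInf (H : otw X₁ ≃ otw X₂)
    (hH : ∀ z, otwLength (H z).1 = otwLength z.1) : X₁ ≃ X₂ :=
  (infMemEquiv X₁).trans <| (H.subtypeEquiv fun z => by rw [hH]).trans (infMemEquiv X₂).symm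

lemma infMem_restrictInf (H : otw X₁ ≃ otw X₂) (hH : ∀ z, otwLength (H z).1 = otwLength z.1)
    (x : X₁) : infMem (restrictInf H hH x) = H (infMem x) :=
  congrArg Subtype.val ((infMemEquiv X₂).apply_symm_apply _)

lemma infMem_restrictInf_symm (H : otw X₁ ≃ otw X₂)
    (hH : ∀ z, otwLength (H z).1 = otwLength z.1) (y : X₂) :
    infMem ((restrictInf H hH).symm y) = H.symm (infMem y) := by
  rw [H.eq_symm_apply, ← infMem_restrictInf H hH, Equiv.apply_symm_apply]

end Restriction

section OTWTopology

open Topology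

variable {X : Set (ℕ → A)}

lemma exists_mem_forall_le_eq_some {w : ℕ → Option A} (hw : w ∈ otw X) {n : ℕ}
    (hn : w n ≠ none) : ∃ x ∈ X, ∀ i ≤ n, w i = some (x i) := by
  rcases hw with ⟨x, hx, rfl⟩ | ⟨α, rfl, hα⟩
  · exact ⟨x, hx, fun _ _ => rfl⟩
  · have hnα : n < α.length := by
      by_contra h
      simp [finSeq, h] at hn
    obtain ⟨b, y, hy⟩ := hα.nonempty
    refine ⟨cat (α ++ [b]) y, hy, fun i hi => ?_⟩
    have hiα : i < α.length := by omega
    have hiα' : ¬α.length < i := by omega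
    simp [finSeq, cat, hiα, hiα', List.getElem_append_left]

lemma get_word (x : ℕ → A) (k : ℕ) (i : Fin (word x k).length) : (word x k).get i = x i := by
  rw [List.get_eq_getElem]
  show (List.ofFn fun j : Fin k => x j)[i.1]'(by simpa [word] using i.2) = x i
  simp

lemma word_mem_language {x : ℕ → A} (hx : x ∈ X) (k : ℕ) : word x k ∈ language X :=
  ⟨x, hx, by simp [word]⟩

lemma isOpen_setOf_apply_eq_some (n : ℕ) (a : A) :
    IsOpen[otwTop X] {w : otw X | w.1 n = some a} := by
  let := otwTop X
  refine isOpen_iff_forall_mem_open.mpr fun w (hw : w.1 n = some a) => ?_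
  obtain ⟨x, hx, hxw⟩ := exists_mem_forall_le_eq_some w.2 (n := n) (by simp [hw])
  refine ⟨Subtype.val ⁻¹' gencyl (word x (n + 1)) ∅, fun z ⟨hz, _⟩ => ?_,
    .basic _ ⟨_, word_mem_language hx _, ∅, rfl⟩, fun i => ?_, by simp⟩
  · have := hz ⟨n, by simp [word]⟩
    rw [get_word] at this
    show z.1 n = some a
    rw [this, ← hxw n le_rfl, hw]
  · have hi : (i : ℕ) ≤ n := by have := i.2; simp [word] at this; omega
    rw [get_word, hxw i hi]

lemma continuous_infMem : Continuous[subTop X, otwTop X] (infMem (X := X)) := by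
  let : TopologicalSpace A := ⊥
  have : DiscreteTopology A := ⟨rfl⟩
  refine continuous_generateFrom_iff.mpr ?_
  rintro _ ⟨α, -, F, rfl⟩
  have hpre : infMem (X := X) ⁻¹' (Subtype.val ⁻¹' gencyl α F) = Subtype.val ⁻¹'
      ((⋂ i : Fin α.length, (fun x : ℕ → A => x i) ⁻¹' {α.get i}) ∩
        (fun x : ℕ → A => x α.length) ⁻¹' (↑F)ᶜ) := by
    ext x
    simp [gencyl, infMem, infSeq]
  rw [hpre]
  refine isOpen_induced (.inter (isOpen_iInter_of_finite fun i => ?_) ?_)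
  · exact (continuous_apply (i : ℕ)).isOpen_preimage _ (isOpen_discrete _)
  · exact (continuous_apply α.length).isOpen_preimage _ (isOpen_discrete _)

lemma continuous_subTop_of_isOpen {Y : Type*} [TopologicalSpace Y] {f : Y → X}
    (hf : ∀ n a, IsOpen {y | (f y).1 n = a}) : Continuous[_, subTop X] f := by
  let : TopologicalSpace A := ⊥
  have : DiscreteTopology A := ⟨rfl⟩
  exact continuous_induced_rng.mpr (continuous_pi fun n => continuous_discrete_rng.mpr (hf n))

lemma isInducing_infMem : @IsInducing _ _ (subTop X) (otwTop X) (infMem (X := X)) := by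
  refine @IsInducing.mk _ _ (subTop X) (otwTop X) _
    (le_antisymm continuous_infMem.le_induced (continuous_id_iff_le.mp ?_))
  refine @continuous_subTop_of_isOpen _ _ _ (.induced infMem (otwTop X)) id fun n a => ?_
  let := otwTop X
  simpa [infMem, infSeq] using isOpen_induced (f := infMem) (isOpen_setOf_apply_eq_some n a)

lemma continuous_of_infMem_apply_eq {A₁ A₂ : Type*} {X₁ : Set (ℕ → A₁)} {X₂ : Set (ℕ → A₂)}
    {K : otw X₁ → otw X₂} (hK : Continuous[otwTop X₁, otwTop X₂] K) {h : X₁ → X₂}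
    (hh : ∀ x, infMem (h x) = K (infMem x)) : Continuous[subTop X₁, subTop X₂] h := by
  let := subTop X₁
  let := subTop X₂
  let := otwTop X₁
  let := otwTop X₂
  refine (@isInducing_infMem _ X₂).continuous_iff.mpr ?_
  simpa only [Function.comp_def, hh] using hK.comp continuous_infMem

end OTWTopology

theorem stmt1_general {A₁ A₂ : Type*}
    (X₁ : Set (ℕ → A₁)) (X₂ : Set (ℕ → A₂))
    (H : ↥(otw X₁) ≃ ↥(otw X₂)) (hH : IsOTWConjugacy X₁ X₂ H) :
    ∃ h : ↥X₁ ≃ ↥X₂,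
      (∀ x : ↥X₁, (H (infMem x)).1 = infSeq (h x).1) ∧
      @Continuous _ _ (subTop X₁) (subTop X₂) h ∧
      @Continuous _ _ (subTop X₂) (subTop X₁) h.symm ∧
      (∀ x y : ↥X₁, y.1 = shiftSeq x.1 → (h y).1 = shiftSeq (h x).1) := by
  obtain ⟨hcont, hcont_symm, hlen, hshift⟩ := hH
  refine ⟨restrictInf H hlen, fun x => congrArg Subtype.val (infMem_restrictInf H hlen x).symm,
    continuous_of_infMem_apply_eq hcont (infMem_restrictInf H hlen),
    continuous_of_infMem_apply_eq hcont_symm (infMem_restrictInf_symm H hlen),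
    fun x y hxy => infSeq_injective ?_⟩
  have hH_shift := hshift (infMem x) (infMem y) (congrArg infSeq hxy)
  rwa [← infMem_restrictInf H hlen, ← infMem_restrictInf H hlen] at hH_shift

/-- a conjugacy `H : X₁^OTW → X₂^OTW` of OTW-subshifts over countably infinite
alphabets maps `X₁` bijectively onto `X₂`, and its restriction `h : X₁ → X₂` is a
homeomorphism for the product topologies satisfying `h ∘ σ = σ ∘ h`. -/
theorem stmt1 {A₁ A₂ : Type*} [Countable A₁] [Infinite A₁] [Countable A₂] [Infinite A₂]
    (X₁ : Set (ℕ → A₁)) (X₂ : Set (ℕ → A₂)) (hX₁ : IsSubshift X₁) (hX₂ : IsSubshift X₂)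
    (H : ↥(otw X₁) ≃ ↥(otw X₂)) (hH : IsOTWConjugacy X₁ X₂ H) :
    ∃ h : ↥X₁ ≃ ↥X₂,
      (∀ x : ↥X₁, (H (infMem x)).1 = infSeq (h x).1) ∧
      @Continuous _ _ (subTop X₁) (subTop X₂) h ∧
      @Continuous _ _ (subTop X₂) (subTop X₁) h.symm ∧
      (∀ x y : ↥X₁, y.1 = shiftSeq x.1 → (h y).1 = shiftSeq (h x).1) :=
  stmt1_general X₁ X₂ H hH

end SubshiftPaper
end

section
/- Let X₁ and X₂ be subshifts over countable alphabets A₁ and A₂, let h : X₁ → X₂ be a bijection that is isometric for the product metrics, and let α ∈ L_{X₁} and β ∈ L_{X₂} be words with |β| = |α| and h(Z_α) = Z_β. If the set {a ∈ A₁ : αa ∈ L_{X₁}} is infinite, then the set {b ∈ A₂ : βb ∈ L_{X₂}} is infinite. -/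
/-!
An isometry for the product metric preserves the position of the first disagreement of two
points. Extensions `αa`, `αa'` by distinct letters are witnessed by points of `Z_α` at distance
`2^{-|α|}`; their images lie in `Z_β` at the same distance, so they first disagree at `|β| = |α|`.
Reading off the letter at position `|β|` thus injects the extensions of `α` into those of `β`.
-/

namespace SubshiftPaper

variable {A : Type*}

lemma word_succ (x : ℕ → A) (n : ℕ) : word x (n + 1) = word x n ++ [x n] := by
  rw [word, List.ofFn_succ', List.concat_eq_append]; rfl

lemma word_eq_word_iff {x y : ℕ → A} {n : ℕ} : word x n = word y n ↔ ∀ i < n, x i = y i := by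
  simp only [word, List.ofFn_inj, funext_iff, Fin.forall_iff]

lemma length_word (x : ℕ → A) (n : ℕ) : (word x n).length = n := List.length_ofFn

lemma prodDist_eq_inv_two_pow_iff {x y : ℕ → A} {n : ℕ} :
    prodDist x y = (2 : ℝ)⁻¹ ^ n ↔ (∀ m < n, x m = y m) ∧ x n ≠ y n := by
  classical
  by_cases hxy : x = y
  · subst hxy
    simp only [prodDist, dif_pos, ne_eq, not_true_eq_false, and_false, iff_false]
    positivity
  · rw [prodDist, dif_neg hxy,
      (pow_right_injective₀ (by norm_num : (0 : ℝ) < 2⁻¹) (by norm_num)).eq_iff,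
      Nat.find_eq_iff]
    simp only [not_not, ne_eq, and_comm]

lemma mem_language_append_singleton_iff {X : Set (ℕ → A)} {α : List A} {a : A} :
    α ++ [a] ∈ language X ↔ ∃ x ∈ cylinder X α, x α.length = a := by
  simp only [language, cylinder, Set.mem_ofPred_eq, List.length_append, List.length_singleton,
    word_succ]
  refine exists_congr fun x => ⟨fun ⟨hX, hw⟩ => ?_, fun ⟨⟨hX, hw⟩, ha⟩ => ⟨hX, by rw [hw, ha]⟩⟩
  obtain ⟨hw, ha⟩ := List.append_inj hw (length_word x α.length)
  exact ⟨⟨hX, hw⟩, List.singleton_inj.1 ha⟩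

lemma prodDist_eq_of_mem_cylinder {X : Set (ℕ → A)} {α : List A} {x y : ℕ → A}
    (hx : x ∈ cylinder X α) (hy : y ∈ cylinder X α) (hne : x α.length ≠ y α.length) :
    prodDist x y = (2 : ℝ)⁻¹ ^ α.length :=
  prodDist_eq_inv_two_pow_iff.2 ⟨word_eq_word_iff.1 (hx.2.trans hy.2.symm), hne⟩

theorem stmt3_general {A₁ A₂ : Type*}
    (X₁ : Set (ℕ → A₁)) (X₂ : Set (ℕ → A₂))
    (h : ↥X₁ ≃ ↥X₂)
    (hiso : ∀ x y : ↥X₁, prodDist (h x).1 (h y).1 = prodDist x.1 y.1)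
    (α : List A₁) (β : List A₂)
    (hlen : β.length = α.length)
    (him : Subtype.val '' (⇑h '' (Subtype.val ⁻¹' cylinder X₁ α)) = cylinder X₂ β)
    (hinf : {a : A₁ | α ++ [a] ∈ language X₁}.Infinite) :
    {b : A₂ | β ++ [b] ∈ language X₂}.Infinite := by
  set S := {a : A₁ | α ++ [a] ∈ language X₁}
  have hwitness (a : S) : ∃ x ∈ cylinder X₁ α, x α.length = a :=
    mem_language_append_singleton_iff.1 a.2
  choose x hxcyl hxa using hwitness
  let y (a : S) : X₂ := h ⟨x a, (hxcyl a).1⟩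
  have hycyl (a : S) : (y a).1 ∈ cylinder X₂ β := him ▸ ⟨y a, ⟨_, hxcyl a, rfl⟩, rfl⟩
  have : Infinite S := hinf.to_subtype
  refine Set.infinite_of_injective_forall_mem (f := fun a => (y a).1 β.length) ?_
    fun a => mem_language_append_singleton_iff.2 ⟨_, hycyl a, rfl⟩
  intro a a' heq
  by_contra hne
  have hdist : prodDist (y a).1 (y a').1 = (2 : ℝ)⁻¹ ^ β.length := by
    rw [hiso, hlen]
    exact prodDist_eq_of_mem_cylinder (hxcyl a) (hxcyl a')
      (show x a α.length ≠ x a' α.length by rw [hxa, hxa]; exact Subtype.coe_ne_coe.2 hne)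
  exact (prodDist_eq_inv_two_pow_iff.1 hdist).2 heq

/-- if `h : X₁ → X₂` is an isometric bijection of subshifts, `α ∈ L_{X₁}`,
`β ∈ L_{X₂}`, `|β| = |α|` and `h(Z_α) = Z_β`, and if `α` can be extended in the language by
infinitely many letters, then so can `β`. -/
theorem stmt3 {A₁ A₂ : Type*} [Countable A₁] [Countable A₂]
    (X₁ : Set (ℕ → A₁)) (X₂ : Set (ℕ → A₂)) (hX₁ : IsSubshift X₁) (hX₂ : IsSubshift X₂)
    (h : ↥X₁ ≃ ↥X₂)
    (hiso : ∀ x y : ↥X₁, prodDist (h x).1 (h y).1 = prodDist x.1 y.1)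
    (α : List A₁) (hα : α ∈ language X₁) (β : List A₂) (hβ : β ∈ language X₂)
    (hlen : β.length = α.length)
    (him : Subtype.val '' (⇑h '' (Subtype.val ⁻¹' cylinder X₁ α)) = cylinder X₂ β)
    (hinf : {a : A₁ | α ++ [a] ∈ language X₁}.Infinite) :
    {b : A₂ | β ++ [b] ∈ language X₂}.Infinite :=
  stmt3_general X₁ X₂ h hiso α β hlen him hinf

end SubshiftPaper
end

section
/- Let X be a subshift over an alphabet A and, for each a ∈ A, let S_a be the bounded operator on ℓ²(X) determined by S_a δ_x = δ_{ax} if x ∈ F_a and S_a δ_x = 0 otherwise; for a word α = α₁⋯α_n ∈ L_X set S_α := S_{α₁}⋯S_{α_n}, with S_ω := 1. Then for all α, β ∈ L_X, one has S_β S_α* S_α S_β* = P_{C(α,β)} as operators on ℓ²(X). -/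
namespace SubshiftPaper

variable {A : Type*}

/-- The Hilbert space `ℓ²(X)`. -/
noncomputable abbrev H2 (X : Set (ℕ → A)) := lp (fun _ : ↥X => ℂ) 2

open Classical in
/-- The canonical orthonormal basis vector `δ_x` of `ℓ²(X)`. -/
noncomputable def delta (X : Set (ℕ → A)) (x : ↥X) : H2 X := lp.single 2 x 1

/-- The defining property of the operator `S_a`: `S_a δ_x = δ_{ax}` for `x ∈ F_a` and
`S_a δ_x = 0` otherwise. -/
def IsShiftOp (X : Set (ℕ → A)) (a : A) (S : H2 X →L[ℂ] H2 X) : Prop :=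
  (∀ (x : ↥X) (hx : cat [a] x.1 ∈ X), S (delta X x) = delta X ⟨cat [a] x.1, hx⟩) ∧
  (∀ x : ↥X, cat [a] x.1 ∉ X → S (delta X x) = 0)

/-- The word operator `S_α = S_{α₁} ⋯ S_{α_n}`, with `S_ω = 1`. -/
noncomputable def Sword (X : Set (ℕ → A)) (S : A → (H2 X →L[ℂ] H2 X)) (α : List A) :
    H2 X →L[ℂ] H2 X :=
  (α.map S).prod


/-!
Write `y = βx` when possible. `S_β*` sends `δ_y` to `δ_x` (and kills `δ_y` if `y` does not begin
with `β`), `S_α` sends `δ_x` to `δ_{αx}` when `αx ∈ X` and to `0` otherwise, and `S_α*`, `S_β`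
bring `δ_{αx}` back to `δ_y`. So `δ_y` survives exactly when `y ∈ C(α,β)`. The adjoints are
computed coordinatewise from `⟪S_α δ_z, δ_y⟫ = [αz = y]` and the injectivity of `z ↦ αz`.
-/

lemma cat_nil (x : ℕ → A) : cat [] x = x := by
  funext n
  simp [cat]

lemma shiftSeq_cat_singleton (a : A) (x : ℕ → A) : shiftSeq (cat [a] x) = x := by
  funext n
  simp [shiftSeq, cat]

lemma cat_cons (a : A) (α : List A) (x : ℕ → A) :
    cat (a :: α) x = cat [a] (cat α x) := by
  funext n
  rcases n with _ | m
  · simp [cat]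
  · simp only [cat, List.length_cons, List.length_nil]
    by_cases h : m < α.length
    · simp [h]
    · simp [h, show m + 1 - (α.length + 1) = m - α.length by omega]

lemma cat_injective (α : List A) : Function.Injective (cat α) := by
  intro x x' h
  funext n
  simpa [cat] using congrFun h (α.length + n)

lemma IsSubshift.shiftSeq_mem {X : Set (ℕ → A)} (hX : IsSubshift X) {x : ℕ → A}
    (hx : x ∈ X) : shiftSeq x ∈ X := by
  obtain ⟨F, -, rfl⟩ := hX
  intro n k
  simpa [shiftSeq, Nat.add_right_comm] using hx (n + 1) k

lemma IsSubshift.mem_of_cat_mem {X : Set (ℕ → A)} (hX : IsSubshift X) {α : List A}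
    {x : ℕ → A} (h : cat α x ∈ X) : x ∈ X := by
  induction α with
  | nil => rwa [cat_nil] at h
  | cons a α ih =>
    rw [cat_cons] at h
    exact ih (shiftSeq_cat_singleton a (cat α x) ▸ hX.shiftSeq_mem h)

section Hilbert

open Classical ContinuousLinearMap

variable {X : Set (ℕ → A)}

lemma delta_apply (x z : ↥X) : (delta X x : ∀ _ : ↥X, ℂ) z = if z = x then 1 else 0 := by
  simp [delta, Pi.single_apply]

lemma inner_delta_left (x : ↥X) (f : H2 X) : inner ℂ (delta X x) f = f x := by
  simp [delta, lp.inner_single_left]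

lemma adjoint_apply_delta_apply (T : H2 X →L[ℂ] H2 X) (y z : ↥X) :
    (adjoint T (delta X y) : ∀ _ : ↥X, ℂ) z = inner ℂ (T (delta X z)) (delta X y) := by
  rw [← inner_delta_left, adjoint_inner_right]

variable {S : A → (H2 X →L[ℂ] H2 X)}

lemma sword_cons (a : A) (α : List A) : Sword X S (a :: α) = S a * Sword X S α := by
  simp [Sword]

lemma sword_apply_delta_of_mem (hX : IsSubshift X) (hS : ∀ a : A, IsShiftOp X a (S a))
    (α : List A) (x : ↥X) (h : cat α x.1 ∈ X) :
    Sword X S α (delta X x) = delta X ⟨cat α x.1, h⟩ := by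
  induction α with
  | nil => simp [Sword, cat_nil]
  | cons a α ih =>
    have h' : cat [a] (cat α x.1) ∈ X := cat_cons a α x.1 ▸ h
    have hα : cat α x.1 ∈ X := hX.mem_of_cat_mem h'
    rw [sword_cons, mul_apply_eq_comp, ih hα, (hS a).1 ⟨cat α x.1, hα⟩ h']
    exact congrArg (delta X) (Subtype.ext (cat_cons a α x.1).symm)

lemma sword_apply_delta_of_not_mem (hX : IsSubshift X) (hS : ∀ a : A, IsShiftOp X a (S a))
    (α : List A) (x : ↥X) (h : cat α x.1 ∉ X) :
    Sword X S α (delta X x) = 0 := by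
  induction α with
  | nil => exact absurd x.2 (by rwa [cat_nil] at h)
  | cons a α ih =>
    rw [sword_cons, mul_apply_eq_comp]
    by_cases hα : cat α x.1 ∈ X
    · rw [sword_apply_delta_of_mem hX hS α x hα]
      exact (hS a).2 _ (cat_cons a α x.1 ▸ h)
    · rw [ih hα, map_zero]

lemma inner_sword_apply_delta (hX : IsSubshift X) (hS : ∀ a : A, IsShiftOp X a (S a))
    (α : List A) (z y : ↥X) :
    inner ℂ (Sword X S α (delta X z)) (delta X y) = if cat α z.1 = y.1 then 1 else 0 := by
  by_cases hm : cat α z.1 ∈ X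
  · rw [sword_apply_delta_of_mem hX hS α z hm, inner_delta_left, delta_apply]
    simp only [Subtype.ext_iff]
  · rw [sword_apply_delta_of_not_mem hX hS α z hm, inner_zero_left, if_neg]
    intro hy
    exact hm (hy ▸ y.2)

lemma adjoint_sword_apply_delta_of_eq_cat (hX : IsSubshift X)
    (hS : ∀ a : A, IsShiftOp X a (S a)) (α : List A) {x y : ↥X} (hy : y.1 = cat α x.1) :
    adjoint (Sword X S α) (delta X y) = delta X x := by
  ext z
  simp only [adjoint_apply_delta_apply, inner_sword_apply_delta hX hS, delta_apply, hy,
    (cat_injective α).eq_iff, Subtype.ext_iff]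

lemma adjoint_sword_apply_delta_of_forall_ne (hX : IsSubshift X)
    (hS : ∀ a : A, IsShiftOp X a (S a)) (α : List A) {y : ↥X}
    (hy : ∀ x : ↥X, y.1 ≠ cat α x.1) :
    adjoint (Sword X S α) (delta X y) = 0 := by
  ext z
  rw [adjoint_apply_delta_apply, inner_sword_apply_delta hX hS, if_neg (hy z).symm]
  rfl

end Hilbert

open ContinuousLinearMap in
/-- `S_β S_α* S_α S_β* = P_{C(α,β)}` for all `α, β` in the language of `X`. -/
theorem stmt10 {A : Type*} (X : Set (ℕ → A)) (hX : IsSubshift X)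
    (S : A → (H2 X →L[ℂ] H2 X)) (hS : ∀ a : A, IsShiftOp X a (S a)) :
    ∀ α ∈ language X, ∀ β ∈ language X, ∀ y : ↥X,
      (y.1 ∈ Cab X α β →
        (Sword X S β * adjoint (Sword X S α) * Sword X S α * adjoint (Sword X S β))
          (delta X y) = delta X y) ∧
      (y.1 ∉ Cab X α β →
        (Sword X S β * adjoint (Sword X S α) * Sword X S α * adjoint (Sword X S β))
          (delta X y) = 0) := by
  intro α _ β _ y
  simp only [mul_apply_eq_comp]
  by_cases hβ : ∃ x : ↥X, y.1 = cat β x.1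
  · obtain ⟨x, hyx⟩ := hβ
    have hC : y.1 ∈ Cab X α β ↔ cat α x.1 ∈ X :=
      ⟨fun ⟨x', hyx', _, hαx'⟩ => cat_injective β (hyx.symm.trans hyx') ▸ hαx',
        fun hαx => ⟨x, hyx, hyx ▸ y.2, hαx⟩⟩
    rw [adjoint_sword_apply_delta_of_eq_cat hX hS β hyx, hC]
    by_cases hαx : cat α x.1 ∈ X
    · rw [sword_apply_delta_of_mem hX hS α x hαx,
        adjoint_sword_apply_delta_of_eq_cat hX hS α rfl,
        sword_apply_delta_of_mem hX hS β x (hyx ▸ y.2)]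
      exact ⟨fun _ => congrArg (delta X) (Subtype.ext hyx.symm), fun h => absurd hαx h⟩
    · rw [sword_apply_delta_of_not_mem hX hS α x hαx, map_zero, map_zero]
      exact ⟨fun h => absurd h hαx, fun _ => rfl⟩
  · push Not at hβ
    have hC : y.1 ∉ Cab X α β := fun ⟨x, hyx, hβx, _⟩ => hβ ⟨x, hX.mem_of_cat_mem hβx⟩ hyx
    rw [adjoint_sword_apply_delta_of_forall_ne hX hS β hβ, map_zero, map_zero, map_zero]
    exact ⟨fun h => absurd h hC, fun _ => rfl⟩

end SubshiftPaper
end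

section
/- Let X = {0^∞} ∪ {(0j)^∞ : j ≥ 1} ∪ {(j0)^∞ : j ≥ 1} be the subshift over the alphabet ℕ determined by the allowed 3-blocks P = {(0,j,0) : j ∈ ℕ} ∪ {(j,0,j) : j ∈ ℕ}. Write A₀ := {0^∞}, B_j := {(0j)^∞}, C_j := {(j0)^∞} (j ≥ 1), U' := {(0j)^∞ : j ≥ 1}, V' := {(j0)^∞ : j ≥ 1}. Then the ℤ-module span_ℤ{χ_S : S ∈ U} equals the ℤ-span of {χ_{A₀}} ∪ {χ_{B_j} : j ≥ 1} ∪ {χ_{C_j} : j ≥ 1} ∪ {χ_{U'}, χ_{V'}}, and the ℤ-module span_ℤ{χ_S : S ∈ U_reg} equals the ℤ-span of {χ_{A₀}} ∪ {χ_{B_j} : j ≥ 1} ∪ {χ_{C_j} : j ≥ 1} ∪ {χ_{U'}}. -/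
namespace SubshiftPaper

variable {A : Type*}

/-- The set of letters `a` with `Z_a ∩ S ≠ ∅`. -/
def letterSet (X : Set (ℕ → A)) (S : Set (ℕ → A)) : Set A :=
  {a | ({x ∈ X | x 0 = a} ∩ S).Nonempty}

/-- The regular sets: `U_reg = {S ∈ U : {a : Z_a ∩ S ≠ ∅} is finite and nonempty}`. -/
def Ureg (X : Set (ℕ → A)) : Set (Set (ℕ → A)) :=
  {S ∈ BA X | (letterSet X S).Finite ∧ (letterSet X S).Nonempty}

/-- The set `P` of allowed 3-blocks. -/
def allowedP : Set (ℕ × ℕ × ℕ) :=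
  {p | ∃ j : ℕ, p = (0, j, 0)} ∪ {p | ∃ j : ℕ, p = (j, 0, j)}

/-- The 2-step subshift over `ℕ` determined by the allowed 3-blocks `P`. -/
def Xtriple : Set (ℕ → ℕ) :=
  {x | ∀ n : ℕ, (x n, x (n + 1), x (n + 2)) ∈ allowedP}

/-- The periodic sequence `(0j)^∞ = 0,j,0,j,…`. -/
def alt0 (j : ℕ) : ℕ → ℕ := fun n => if n % 2 = 0 then 0 else j

/-- The periodic sequence `(j0)^∞ = j,0,j,0,…`. -/
def alt1 (j : ℕ) : ℕ → ℕ := fun n => if n % 2 = 0 then j else 0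

open Classical in
/-- The indicator function `χ_S : X → ℤ` of a subset `S`. -/
noncomputable def ind (X : Set (ℕ → A)) (S : Set (ℕ → A)) : ↥X → ℤ :=
  fun x => if x.1 ∈ S then 1 else 0

/-!
Points of `X` are `2`-periodic, so a point of `X` is determined by any of its tails. Hence whether
`(0j)^∞` or `(j0)^∞` lies in `C(α,β)` is decided by comparing the letters of `α` and `β` with `0`
and `j`: it is the same for all but finitely many `j`, and this survives Boolean combinations. So
every `S ∈ U` meets `U'` and `V'` in finite or cofinite sets, which writes `χ_S` as an integer
combination of the listed generators. For `S ∈ U_reg` every `j` with `(j0)^∞ ∈ S` is a letter of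
`S`, so `S ∩ V'` is finite and `χ_{V'}` is not needed. Conversely the generators are Boolean
combinations of `{0^∞} = C(00, ω)`, `{0^∞} ∪ U' = C(ω, 0)`, `{0^∞} ∪ V' = C(0, ω)`,
`B_j = C(j0, 0)` and `C_j = C(ω, j)`.
-/

open Filter

section General

variable {A : Type*} {X : Set (ℕ → A)} {S T : Set (ℕ → A)}

lemma word_cat (α : List A) (x : ℕ → A) : word (cat α x) α.length = α := by
  refine List.ext_getElem (by simp [word]) fun i hi _ => ?_
  simp [word, cat]

lemma cat_shift (α : List A) (x : ℕ → A) : (fun n => cat α x (n + α.length)) = x := by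
  funext n
  simp [cat]

lemma cat_word_shift (y : ℕ → A) (m : ℕ) : cat (word y m) (fun n => y (n + m)) = y := by
  funext n
  by_cases hn : n < m
  · simp [cat, word, hn]
  · simp [cat, word, hn, Nat.sub_add_cancel (not_lt.mp hn)]

lemma word_succ_s17 (y : ℕ → A) (m : ℕ) : word y (m + 1) = y 0 :: word (fun n => y (n + 1)) m := by
  simp [word, List.ofFn_succ]

lemma Cab_subset (α β : List A) : Cab X α β ⊆ X := by
  rintro _ ⟨x, rfl, hβ, -⟩
  exact hβ

lemma Cab_mem_BA {α β : List A} (hα : α ∈ language X) (hβ : β ∈ language X) :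
    Cab X α β ∈ BA X :=
  fun _ hC => hC.2.1 α hα β hβ

lemma inter_mem_BA (hS : S ∈ BA X) (hT : T ∈ BA X) : S ∩ T ∈ BA X :=
  fun C hC => hC.2.2.2.1 S (hS C hC) T (hT C hC)

lemma diff_mem_BA (hS : S ∈ BA X) : X \ S ∈ BA X :=
  fun C hC => hC.2.2.2.2 S (hS C hC)

lemma letterSet_eq_image : letterSet X S = (fun x => x 0) '' (X ∩ S) := by
  ext a
  simp [letterSet, Set.Nonempty, and_assoc, and_comm]

lemma singleton_mem_Ureg {x : ℕ → A} (hx : x ∈ X) (h : {x} ∈ BA X) : {x} ∈ Ureg X := by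
  refine ⟨h, ?_⟩
  rw [letterSet_eq_image, Set.inter_singleton_of_mem hx, Set.image_singleton]
  exact ⟨Set.finite_singleton _, Set.singleton_nonempty _⟩

lemma ind_diff (h : T ⊆ S) : ind X (S \ T) = ind X S - ind X T := by
  funext x
  by_cases hT : x.1 ∈ T
  · simp [ind, hT, h hT]
  · by_cases hS : x.1 ∈ S <;> simp [ind, hS, hT]

lemma ind_finset (F : Finset (ℕ → A)) : ind X ↑F = ∑ a ∈ F, ind X {a} := by
  classical
  funext x
  simp [ind, Finset.sum_apply]

variable {M : Submodule ℤ (↥X → ℤ)} {b : ℕ → ℕ → A}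

lemma ind_mem_of_finite (hS : S.Finite)
    (h : ∀ x ∈ S, ind X {x} ∈ M) : ind X S ∈ M := by
  rw [← hS.coe_toFinset, ind_finset]
  exact Submodule.sum_mem _ fun x hx => h x (hS.mem_toFinset.mp hx)

lemma ind_inter_mem_of_finite (hS : (b ⁻¹' S).Finite) (hb : ∀ j, 1 ≤ j → ind X {b j} ∈ M) :
    ind X (S ∩ {y | ∃ j, 1 ≤ j ∧ y = b j}) ∈ M := by
  refine ind_mem_of_finite ((hS.image b).subset ?_) ?_
  · rintro _ ⟨hy, j, -, rfl⟩
    exact ⟨j, hy, rfl⟩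
  · rintro _ ⟨-, j, hj, rfl⟩
    exact hb j hj

lemma ind_inter_mem (hS : EventuallyConst (b ⁻¹' S) cofinite)
    (hB : ind X {y | ∃ j, 1 ≤ j ∧ y = b j} ∈ M) (hb : ∀ j, 1 ≤ j → ind X {b j} ∈ M) :
    ind X (S ∩ {y | ∃ j, 1 ≤ j ∧ y = b j}) ∈ M := by
  set B := {y | ∃ j, 1 ≤ j ∧ y = b j}
  rcases eventuallyConst_set.mp hS with h | h
  · have hSB : S ∩ B = B \ (Sᶜ ∩ B) := by
      ext y
      by_cases hy : y ∈ S <;> simp [hy]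
    rw [hSB, ind_diff Set.inter_subset_right]
    exact sub_mem hB (ind_inter_mem_of_finite (eventually_cofinite.mp h) hb)
  · have hfin : {j | ¬¬b j ∈ S}.Finite := eventually_cofinite.mp h
    simp only [not_not] at hfin
    exact ind_inter_mem_of_finite hfin hb

end General

section Xtriple

lemma mem_Xtriple_iff {x : ℕ → ℕ} :
    x ∈ Xtriple ↔ ∀ n, x (n + 2) = x n ∧ (x n = 0 ∨ x (n + 1) = 0) := by
  refine forall_congr' fun n => ⟨?_, fun ⟨hper, hzero⟩ => ?_⟩
  · rintro (⟨j, hj⟩ | ⟨j, hj⟩) <;> simp only [Prod.mk.injEq] at hj <;> omega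
  · rcases hzero with h | h
    · exact Or.inl ⟨x (n + 1), by simp [h, hper]⟩
    · exact Or.inr ⟨x n, by simp [h, hper]⟩

variable {x y : ℕ → ℕ}

lemma apply_add_two_mul (hx : x ∈ Xtriple) (n k : ℕ) : x (n + 2 * k) = x n := by
  induction k with
  | zero => rfl
  | succ k ih => rw [show n + 2 * (k + 1) = n + 2 * k + 2 by ring, (mem_Xtriple_iff.mp hx _).1, ih]

lemma shift_mem_Xtriple (hx : x ∈ Xtriple) (k : ℕ) : (fun n => x (n + k)) ∈ Xtriple :=
  mem_Xtriple_iff.mpr fun n => by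
    simpa only [Nat.add_right_comm _ k] using mem_Xtriple_iff.mp hx (n + k)

lemma eq_of_shift_eq (hx : x ∈ Xtriple) (hy : y ∈ Xtriple) {N : ℕ}
    (h : ∀ n, x (n + N) = y (n + N)) : x = y := by
  funext n
  rw [← apply_add_two_mul hx n N, ← apply_add_two_mul hy n N, two_mul, ← add_assoc, h]

lemma alt0_mem (j : ℕ) : alt0 j ∈ Xtriple :=
  mem_Xtriple_iff.mpr fun n => by simp only [alt0]; split_ifs <;> omega

lemma alt1_mem (j : ℕ) : alt1 j ∈ Xtriple :=
  mem_Xtriple_iff.mpr fun n => by simp only [alt1]; split_ifs <;> omega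

lemma alt1_eq_shift (j : ℕ) : alt1 j = fun n => alt0 j (n + 1) := by
  funext n
  simp only [alt0, alt1]
  split_ifs <;> omega

lemma Xtriple_eq : Xtriple = Set.range alt0 ∪ Set.range alt1 := by
  refine subset_antisymm (fun x hx => ?_) (Set.union_subset ?_ ?_)
  · have hper n : x n = if n % 2 = 0 then x 0 else x 1 := by
      rw [← Nat.mod_add_div n 2, apply_add_two_mul hx]
      rcases Nat.mod_two_eq_zero_or_one n with h | h <;> simp [h]
    rcases (mem_Xtriple_iff.mp hx 0).2 with h | h
    · exact Or.inl ⟨x 1, funext fun n => by rw [hper n, h]; rfl⟩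
    · exact Or.inr ⟨x 0, funext fun n => by rw [hper n, h]; rfl⟩
  · rintro _ ⟨j, rfl⟩; exact alt0_mem j
  · rintro _ ⟨j, rfl⟩; exact alt1_mem j

@[simp] lemma alt0_inj {j k : ℕ} : alt0 j = alt0 k ↔ j = k :=
  ⟨fun h => by simpa [alt0] using congrFun h 1, fun h => h ▸ rfl⟩

@[simp] lemma alt1_inj {j k : ℕ} : alt1 j = alt1 k ↔ j = k :=
  ⟨fun h => by simpa [alt1] using congrFun h 0, fun h => h ▸ rfl⟩

@[simp] lemma alt0_eq_alt1 {j k : ℕ} : alt0 j = alt1 k ↔ j = 0 ∧ k = 0 := by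
  refine ⟨fun h => ⟨by simpa [alt0, alt1] using congrFun h 1,
    by simpa [alt0, alt1] using (congrFun h 0).symm⟩, ?_⟩
  rintro ⟨rfl, rfl⟩
  funext n
  simp [alt0, alt1]

@[simp] lemma alt1_eq_alt0 {j k : ℕ} : alt1 j = alt0 k ↔ j = 0 ∧ k = 0 := by
  rw [eq_comm, alt0_eq_alt1, and_comm]

lemma alt0_zero : alt0 0 = fun _ => 0 := funext fun n => by simp [alt0]

lemma alt1_zero : alt1 0 = fun _ => 0 := funext fun n => by simp [alt1]

lemma zero_mem_Xtriple : (fun _ => 0) ∈ Xtriple := alt0_zero ▸ alt0_mem 0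

@[simp] lemma alt0_eq_zero {j : ℕ} : alt0 j = (fun _ => 0) ↔ j = 0 := by
  rw [← alt0_zero, alt0_inj]

@[simp] lemma alt1_eq_zero {j : ℕ} : alt1 j = (fun _ => 0) ↔ j = 0 := by
  rw [← alt1_zero, alt1_inj]

/- `α x` lies in `X` iff it is the point of `X` with tail `x`, which by `2`-periodicity is `y`
shifted by `|α| + k`. -/
lemma cat_mem_Xtriple_iff (hy : y ∈ Xtriple) (α : List ℕ) (k : ℕ) :
    cat α (fun n => y (n + k)) ∈ Xtriple ↔
      word (fun n => y (n + (α.length + k))) α.length = α := by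
  set z := fun n => y (n + (α.length + k))
  have hz : z ∈ Xtriple := shift_mem_Xtriple hy _
  have hz_shift : (fun n => z (n + α.length)) = fun n => y (n + k) := funext fun n => by
    show y (n + α.length + (α.length + k)) = _
    rw [show n + α.length + (α.length + k) = n + k + 2 * α.length by ring,
      apply_add_two_mul hy]
  rw [← hz_shift]
  refine ⟨fun h => ?_, fun h => ?_⟩
  · rw [← eq_of_shift_eq h hz (congrFun (cat_shift α _)), word_cat]
  · have hcat := cat_word_shift z α.length
    rw [h] at hcat
    rwa [hcat]

lemma mem_Cab_iff (hy : y ∈ Xtriple) (α β : List ℕ) :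
    y ∈ Cab Xtriple α β ↔
      word y β.length = β ∧ word (fun n => y (n + (α.length + β.length))) α.length = α := by
  refine ⟨?_, fun ⟨hβ, hα⟩ => ?_⟩
  · rintro ⟨x, rfl, -, hα⟩
    refine ⟨word_cat β x, (cat_mem_Xtriple_iff hy α β.length).mp ?_⟩
    rwa [cat_shift]
  · have hcat := cat_word_shift y β.length
    rw [hβ] at hcat
    exact ⟨_, hcat.symm, by rwa [hcat], (cat_mem_Xtriple_iff hy α β.length).mpr hα⟩

end Xtriple

section AltEventuallyConst

def AltEventuallyConst (S : Set (ℕ → ℕ)) : Prop :=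
  EventuallyConst (alt0 ⁻¹' S) cofinite ∧ EventuallyConst (alt1 ⁻¹' S) cofinite

lemma eventuallyConst_alt0_apply_eq (c a : ℕ) :
    EventuallyConst (fun j => alt0 j c = a) cofinite := by
  by_cases hc : c % 2 = 0
  · simp only [alt0, hc, if_true]
    exact EventuallyConst.const _
  · simp only [alt0, hc, if_false]
    exact eventuallyConst_pred.mpr (Or.inr (eventually_cofinite_ne a))

lemma eventuallyConst_word_alt0_eq (c m : ℕ) (δ : List ℕ) :
    EventuallyConst (fun j => word (fun n => alt0 j (n + c)) m = δ) cofinite := by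
  induction m generalizing c δ with
  | zero => simp [word]
  | succ m ih =>
    cases δ with
    | nil => simp [word_succ_s17]
    | cons a δ =>
      simp only [word_succ_s17, List.cons.injEq, zero_add, add_assoc]
      exact (eventuallyConst_alt0_apply_eq c a).comp₂ (· ∧ ·) (ih (1 + c) δ)

lemma altEventuallyConst_Cab (α β : List ℕ) : AltEventuallyConst (Cab Xtriple α β) := by
  have h r : EventuallyConst (fun j => (fun n => alt0 j (n + r)) ∈ Cab Xtriple α β) cofinite := by
    simp only [mem_Cab_iff (shift_mem_Xtriple (alt0_mem _) r), add_assoc]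
    exact (eventuallyConst_word_alt0_eq _ _ _).comp₂ (· ∧ ·) (eventuallyConst_word_alt0_eq _ _ _)
  have h1 := h 1
  simp only [← alt1_eq_shift] at h1
  exact ⟨h 0, h1⟩

lemma altEventuallyConst_Xtriple : AltEventuallyConst Xtriple :=
  ⟨eventuallyConst_set.mpr (Or.inl (Eventually.of_forall alt0_mem)),
    eventuallyConst_set.mpr (Or.inl (Eventually.of_forall alt1_mem))⟩

variable {S T : Set (ℕ → ℕ)}

lemma AltEventuallyConst.union (hS : AltEventuallyConst S) (hT : AltEventuallyConst T) :
    AltEventuallyConst (S ∪ T) :=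
  ⟨hS.1.comp₂ (· ∨ ·) hT.1, hS.2.comp₂ (· ∨ ·) hT.2⟩

lemma AltEventuallyConst.inter (hS : AltEventuallyConst S) (hT : AltEventuallyConst T) :
    AltEventuallyConst (S ∩ T) :=
  ⟨hS.1.comp₂ (· ∧ ·) hT.1, hS.2.comp₂ (· ∧ ·) hT.2⟩

lemma AltEventuallyConst.diff (hS : AltEventuallyConst S) (hT : AltEventuallyConst T) :
    AltEventuallyConst (S \ T) :=
  ⟨hS.1.comp₂ (· ∧ ¬ ·) hT.1, hS.2.comp₂ (· ∧ ¬ ·) hT.2⟩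

lemma AltEventuallyConst.of_mem_BA (hS : S ∈ BA Xtriple) : AltEventuallyConst S :=
  hS {S | AltEventuallyConst S} ⟨altEventuallyConst_Xtriple,
    fun α _ β _ => altEventuallyConst_Cab α β, fun _ hS _ hT => hS.union hT,
    fun _ hS _ hT => hS.inter hT, fun _ hS => altEventuallyConst_Xtriple.diff hS⟩

end AltEventuallyConst

lemma ind_Xtriple_eq_add (S : Set (ℕ → ℕ)) :
    ind Xtriple S = ind Xtriple (S ∩ {fun _ => 0}) +
      ind Xtriple (S ∩ {y | ∃ j, 1 ≤ j ∧ y = alt0 j}) +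
        ind Xtriple (S ∩ {y | ∃ j, 1 ≤ j ∧ y = alt1 j}) := by
  funext ⟨x, hx⟩
  rw [Xtriple_eq] at hx
  rcases hx with ⟨j, rfl⟩ | ⟨j, rfl⟩ <;> rcases Nat.eq_zero_or_pos j with rfl | hj
  all_goals simp only [ind, Pi.add_apply]; split_ifs <;> simp_all

lemma ind_mem_of_altEventuallyConst {M : Submodule ℤ (↥Xtriple → ℤ)}
    (hA : ind Xtriple {fun _ => 0} ∈ M) (hU : ind Xtriple {y | ∃ j, 1 ≤ j ∧ y = alt0 j} ∈ M)
    (hB : ∀ j, 1 ≤ j → ind Xtriple {alt0 j} ∈ M) {S : Set (ℕ → ℕ)}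
    (hS : EventuallyConst (alt0 ⁻¹' S) cofinite)
    (hV : ind Xtriple (S ∩ {y | ∃ j, 1 ≤ j ∧ y = alt1 j}) ∈ M) : ind Xtriple S ∈ M := by
  rw [ind_Xtriple_eq_add S]
  refine add_mem (add_mem ?_ (ind_inter_mem hS hU hB)) hV
  exact ind_mem_of_finite ((Set.finite_singleton _).inter_of_right S) fun x hx => by
    rwa [Set.mem_singleton_iff.mp hx.2]

lemma alt1_preimage_subset_letterSet (S : Set (ℕ → ℕ)) : alt1 ⁻¹' S ⊆ letterSet Xtriple S :=
  fun j hj => ⟨alt1 j, ⟨alt1_mem j, by simp [alt1]⟩, hj⟩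

lemma eq_of_alt_mem_iff {S T : Set (ℕ → ℕ)} (hS : S ⊆ Xtriple) (hT : T ⊆ Xtriple)
    (h0 : ∀ j, alt0 j ∈ S ↔ alt0 j ∈ T) (h1 : ∀ j, alt1 j ∈ S ↔ alt1 j ∈ T) : S = T := by
  ext y
  by_cases hy : y ∈ Xtriple
  · rw [Xtriple_eq] at hy
    rcases hy with ⟨j, rfl⟩ | ⟨j, rfl⟩
    exacts [h0 j, h1 j]
  · exact iff_of_false (fun h => hy (hS h)) (fun h => hy (hT h))

lemma zero_eq_Cab : {fun _ => 0} = Cab Xtriple [0, 0] [] := by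
  refine eq_of_alt_mem_iff (Set.singleton_subset_iff.mpr zero_mem_Xtriple) (Cab_subset _ _)
    (fun j => ?_) (fun j => ?_)
  · simp [mem_Cab_iff (alt0_mem j), word, List.ofFn_succ, alt0]
  · simp [mem_Cab_iff (alt1_mem j), word, List.ofFn_succ, alt1]

lemma setOf_alt0_eq_Cab :
    {y | ∃ j, 1 ≤ j ∧ y = alt0 j} = Cab Xtriple [] [0] ∩ (Xtriple \ Cab Xtriple [0, 0] []) := by
  refine eq_of_alt_mem_iff (by rintro _ ⟨j, -, rfl⟩; exact alt0_mem j)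
    (Set.inter_subset_left.trans (Cab_subset _ _)) (fun j => ?_) (fun j => ?_)
  · simp [mem_Cab_iff (alt0_mem j), alt0_mem, word, List.ofFn_succ, alt0]; omega
  · simp [mem_Cab_iff (alt1_mem j), alt1_mem, word, List.ofFn_succ, alt1]

lemma setOf_alt1_eq_Cab :
    {y | ∃ j, 1 ≤ j ∧ y = alt1 j} = Cab Xtriple [0] [] ∩ (Xtriple \ Cab Xtriple [0, 0] []) := by
  refine eq_of_alt_mem_iff (by rintro _ ⟨j, -, rfl⟩; exact alt1_mem j)
    (Set.inter_subset_left.trans (Cab_subset _ _)) (fun j => ?_) (fun j => ?_)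
  · simp [mem_Cab_iff (alt0_mem j), alt0_mem, word, List.ofFn_succ, alt0]
  · simp [mem_Cab_iff (alt1_mem j), alt1_mem, word, List.ofFn_succ, alt1]; omega

lemma alt0_singleton_eq_Cab {j : ℕ} (hj : 1 ≤ j) : {alt0 j} = Cab Xtriple [j, 0] [0] := by
  refine eq_of_alt_mem_iff (by simpa using alt0_mem j) (Cab_subset _ _)
    (fun k => ?_) (fun k => ?_)
  · simp [mem_Cab_iff (alt0_mem k), word, List.ofFn_succ, alt0]
  · simp [mem_Cab_iff (alt1_mem k), word, List.ofFn_succ, alt1]; omega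

lemma alt1_singleton_eq_Cab {j : ℕ} (hj : 1 ≤ j) : {alt1 j} = Cab Xtriple [] [j] := by
  refine eq_of_alt_mem_iff (by simpa using alt1_mem j) (Cab_subset _ _)
    (fun k => ?_) (fun k => ?_)
  · simp [mem_Cab_iff (alt0_mem k), word, List.ofFn_succ, alt0]; omega
  · simp [mem_Cab_iff (alt1_mem k), word, List.ofFn_succ, alt1]

lemma nil_mem_language : [] ∈ language Xtriple := ⟨alt1 0, alt1_mem 0, rfl⟩

lemma singleton_mem_language (j : ℕ) : [j] ∈ language Xtriple :=
  ⟨alt1 j, alt1_mem j, by simp [word, alt1]⟩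

lemma pair_mem_language (j : ℕ) : [j, 0] ∈ language Xtriple :=
  ⟨alt1 j, alt1_mem j, by simp [word, List.ofFn_succ, alt1]⟩

lemma zero_mem_BA : {fun _ => 0} ∈ BA Xtriple := by
  rw [zero_eq_Cab]
  exact Cab_mem_BA (pair_mem_language 0) nil_mem_language

lemma setOf_alt0_mem_BA : {y | ∃ j, 1 ≤ j ∧ y = alt0 j} ∈ BA Xtriple := by
  rw [setOf_alt0_eq_Cab, ← zero_eq_Cab]
  exact inter_mem_BA (Cab_mem_BA nil_mem_language (singleton_mem_language 0))
    (diff_mem_BA zero_mem_BA)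

lemma setOf_alt1_mem_BA : {y | ∃ j, 1 ≤ j ∧ y = alt1 j} ∈ BA Xtriple := by
  rw [setOf_alt1_eq_Cab, ← zero_eq_Cab]
  exact inter_mem_BA (Cab_mem_BA (singleton_mem_language 0) nil_mem_language)
    (diff_mem_BA zero_mem_BA)

lemma alt0_singleton_mem_BA {j : ℕ} (hj : 1 ≤ j) : {alt0 j} ∈ BA Xtriple := by
  rw [alt0_singleton_eq_Cab hj]
  exact Cab_mem_BA (pair_mem_language j) (singleton_mem_language 0)

lemma alt1_singleton_mem_BA {j : ℕ} (hj : 1 ≤ j) : {alt1 j} ∈ BA Xtriple := by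
  rw [alt1_singleton_eq_Cab hj]
  exact Cab_mem_BA nil_mem_language (singleton_mem_language j)

lemma setOf_alt0_mem_Ureg : {y | ∃ j, 1 ≤ j ∧ y = alt0 j} ∈ Ureg Xtriple := by
  refine ⟨setOf_alt0_mem_BA, ?_⟩
  rw [letterSet_eq_image]
  refine ⟨(Set.finite_singleton 0).subset ?_, ⟨0, alt0 1, ⟨alt0_mem 1, 1, le_rfl, rfl⟩, rfl⟩⟩
  rintro _ ⟨_, ⟨-, j, -, rfl⟩, rfl⟩
  simp [alt0]

/-- for the 2-step subshift `X` above,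
`span_ℤ{χ_S : S ∈ U} = span_ℤ({χ_{A₀}} ∪ {χ_{B_j}, χ_{C_j} : j ≥ 1} ∪ {χ_{U'}, χ_{V'}})` and
`span_ℤ{χ_S : S ∈ U_reg} = span_ℤ({χ_{A₀}} ∪ {χ_{B_j}, χ_{C_j} : j ≥ 1} ∪ {χ_{U'}})`. -/
theorem stmt17 :
    Submodule.span ℤ {f : ↥Xtriple → ℤ | ∃ S ∈ BA Xtriple, f = ind Xtriple S} =
      Submodule.span ℤ
        ({ind Xtriple {fun _ => 0}, ind Xtriple {y | ∃ j, 1 ≤ j ∧ y = alt0 j},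
            ind Xtriple {y | ∃ j, 1 ≤ j ∧ y = alt1 j}} ∪
          {f | ∃ j, 1 ≤ j ∧ f = ind Xtriple {alt0 j}} ∪
          {f | ∃ j, 1 ≤ j ∧ f = ind Xtriple {alt1 j}}) ∧
    Submodule.span ℤ {f : ↥Xtriple → ℤ | ∃ S ∈ Ureg Xtriple, f = ind Xtriple S} =
      Submodule.span ℤ
        ({ind Xtriple {fun _ => 0}, ind Xtriple {y | ∃ j, 1 ≤ j ∧ y = alt0 j}} ∪
          {f | ∃ j, 1 ≤ j ∧ f = ind Xtriple {alt0 j}} ∪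
          {f | ∃ j, 1 ≤ j ∧ f = ind Xtriple {alt1 j}}) := by
  open Submodule in
  refine ⟨le_antisymm (span_le.mpr ?_) (span_le.mpr ?_),
    le_antisymm (span_le.mpr ?_) (span_le.mpr ?_)⟩
  · rintro _ ⟨S, hS, rfl⟩
    have hS' := AltEventuallyConst.of_mem_BA hS
    exact ind_mem_of_altEventuallyConst (subset_span (by simp)) (subset_span (by simp))
      (fun j hj => subset_span (Or.inl (Or.inr ⟨j, hj, rfl⟩))) hS'.1
      (ind_inter_mem hS'.2 (subset_span (by simp)) fun j hj => subset_span (Or.inr ⟨j, hj, rfl⟩))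
  · rintro _ (((rfl | rfl | rfl) | ⟨j, hj, rfl⟩) | ⟨j, hj, rfl⟩)
    exacts [subset_span ⟨_, zero_mem_BA, rfl⟩, subset_span ⟨_, setOf_alt0_mem_BA, rfl⟩,
      subset_span ⟨_, setOf_alt1_mem_BA, rfl⟩, subset_span ⟨_, alt0_singleton_mem_BA hj, rfl⟩,
      subset_span ⟨_, alt1_singleton_mem_BA hj, rfl⟩]
  · rintro _ ⟨S, ⟨hS, hfin, -⟩, rfl⟩
    exact ind_mem_of_altEventuallyConst (subset_span (by simp)) (subset_span (by simp))
      (fun j hj => subset_span (Or.inl (Or.inr ⟨j, hj, rfl⟩)))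
      (AltEventuallyConst.of_mem_BA hS).1
      (ind_inter_mem_of_finite (hfin.subset (alt1_preimage_subset_letterSet S))
        fun j hj => subset_span (Or.inr ⟨j, hj, rfl⟩))
  · rintro _ (((rfl | rfl) | ⟨j, hj, rfl⟩) | ⟨j, hj, rfl⟩)
    exacts [subset_span ⟨_, singleton_mem_Ureg zero_mem_Xtriple zero_mem_BA, rfl⟩,
      subset_span ⟨_, setOf_alt0_mem_Ureg, rfl⟩,
      subset_span ⟨_, singleton_mem_Ureg (alt0_mem j) (alt0_singleton_mem_BA hj), rfl⟩,
      subset_span ⟨_, singleton_mem_Ureg (alt1_mem j) (alt1_singleton_mem_BA hj), rfl⟩]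

end SubshiftPaper
end
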